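/- Let d ≥ 2, let 1 ≤ γ_1 ≤ … ≤ γ_{d-1} ≤ β be positive integers, and let p, n be positive integers with gcd(p,n) = 1. Then ∏_{k=1}^{βn−1} ( d − e^{2πi p k/(βn)} − ∑_{m=1}^{d-1} e^{2πi (γ_m n + p) k/(βn)} ) = n d^{βn−1} ∏_{k=1}^{β−1} ( 1 − d^{−n} (1 + ∑_{m=1}^{d-1} e^{2πi γ_m k/β})^{n} e^{2πi p k/β} ). -/

import Mathlib

open Finset Real

/-!
Write `ζ = e^{2πi/(βn)}` and index `k = j + βt` with `0 ≤ j < β`, `0 ≤ t < n`. Since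
`ζ^{βn} = 1`, the eigenvalue at `j + βt` is `d - μ^t ζ^{pj} S_j` with `S_j = 1 + ∑_m ζ^{nγ_m j}`
and `μ = ζ^{βp}`, a primitive `n`-th root of unity because `gcd(p, n) = 1`. The identity
`∏_t (a - μ^t b) = a^n - b^n` collapses each residue class `j ≠ 0` to one factor
`d^n - S_j^n ζ^{npj}`, while for `j = 0` we have `S_0 = d` and `∏_{t=1}^{n-1} d (1 - μ^t) = n d^{n-1}`.
-/

namespace Finset

variable {M : Type*} [CommMonoid M]

theorem prod_Ico_one_eq_prod_range_update (f : ℕ → M) (N : ℕ) :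
    ∏ k ∈ Ico 1 N, f k = ∏ k ∈ range N, Function.update f 0 1 k := by
  rcases N.eq_zero_or_pos with rfl | hN
  · simp
  rw [prod_range_eq_mul_Ico _ hN, Function.update_self, one_mul]
  exact prod_congr rfl fun k hk ↦ (Function.update_of_ne (by simp at hk; omega) _ _).symm

theorem prod_range_mul (f : ℕ → M) (β n : ℕ) :
    ∏ k ∈ range (β * n), f k = ∏ j ∈ range β, ∏ t ∈ range n, f (j + β * t) := by
  induction n with
  | zero => simp
  | succ n ih =>
    rw [mul_add_one, prod_range_add, ih]
    simp only [prod_range_succ, prod_mul_distrib, add_comm (β * n)]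

theorem prod_Ico_one_mul_eq_mul_prod_prod (f : ℕ → M) {β : ℕ} (hβ : 0 < β) (n : ℕ) :
    ∏ k ∈ Ico 1 (β * n), f k =
      (∏ t ∈ Ico 1 n, f (β * t)) * ∏ j ∈ Ico 1 β, ∏ t ∈ range n, f (j + β * t) := by
  rw [prod_Ico_one_eq_prod_range_update, prod_range_mul, prod_range_eq_mul_Ico _ hβ,
    prod_Ico_one_eq_prod_range_update (fun t ↦ f (β * t))]
  congr 1
  · refine prod_congr rfl fun t _ ↦ ?_
    rcases t.eq_zero_or_pos with rfl | ht
    · simp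
    · simp [Function.update_of_ne (show β * t ≠ 0 by positivity), ht.ne']
  · refine prod_congr rfl fun j hj ↦ prod_congr rfl fun t _ ↦ ?_
    exact Function.update_of_ne (by simp at hj; omega) _ _

theorem prod_sub_eq_pow_card_mul_prod {K ι : Type*} [Field K] (s : Finset ι) {a : K}
    (ha : a ≠ 0) (x : ι → K) : ∏ j ∈ s, (a - x j) = a ^ #s * ∏ j ∈ s, (1 - a⁻¹ * x j) := by
  rw [← prod_const, ← prod_mul_distrib]
  refine prod_congr rfl fun j _ ↦ ?_
  field_simp

end Finset

namespace IsPrimitiveRoot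

theorem pow_mul_of_coprime {M : Type*} [CommMonoid M] {ζ : M} {β n : ℕ}
    (hζ : IsPrimitiveRoot ζ (β * n)) (hβ : 0 < β) (hn : 0 < n) (p : ℕ) (hpn : p.Coprime n) :
    IsPrimitiveRoot (ζ ^ (β * p)) n := by
  rw [pow_mul]
  exact (hζ.pow (by positivity) rfl).pow_of_coprime p hpn

variable {R : Type*} [CommRing R] [IsDomain R] {ζ : R} {n : ℕ}

theorem prod_range_sub_pow_mul (hζ : IsPrimitiveRoot ζ n) (hn : 0 < n) (a b : R) :
    ∏ i ∈ range n, (a - ζ ^ i * b) = a ^ n - b ^ n := by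
  simpa [Polynomial.eval_prod] using
    (congrArg (Polynomial.eval a) (X_pow_sub_C_eq_prod hζ hn (rfl : b ^ n = b ^ n))).symm

theorem prod_Ico_one_sub_pow (hζ : IsPrimitiveRoot ζ n) (hn : 0 < n) :
    ∏ k ∈ Ico 1 n, (1 - ζ ^ k) = n := by
  obtain ⟨m, rfl⟩ := Nat.exists_eq_add_one_of_ne_zero hn.ne'
  rw [prod_Ico_eq_prod_range, Nat.add_sub_cancel]
  push_cast
  simpa [add_comm] using hζ.prod_one_sub_pow_eq_order

end IsPrimitiveRoot

section CirculantLaplacian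

variable {K : Type*} [CommRing K] {ι : Type*}

/-- For `ζ` a primitive root of unity of order the number of vertices and `D = #s + 1`, this is
the `k`-th Laplacian eigenvalue of the directed circulant graph with generators `p` and
`c i * n + p` for `i ∈ s`. -/
def circulantEigenvalue (ζ D : K) (p n : ℕ) (s : Finset ι) (c : ι → ℕ) (k : ℕ) : K :=
  D - ζ ^ (p * k) - ∑ i ∈ s, ζ ^ ((c i * n + p) * k)

variable {ζ : K} (D : K) {β n : ℕ} (p : ℕ) (s : Finset ι) (c : ι → ℕ)

theorem circulantEigenvalue_add_mul (hζ : ζ ^ (β * n) = 1) (j t : ℕ) :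
    circulantEigenvalue ζ D p n s c (j + β * t) =
      D - (ζ ^ (β * p)) ^ t * (ζ ^ (p * j) * (1 + ∑ i ∈ s, ζ ^ (n * c i * j))) := by
  have hgen : ∀ i ∈ s, ζ ^ ((c i * n + p) * (j + β * t)) =
      (ζ ^ (β * p)) ^ t * ζ ^ (p * j) * ζ ^ (n * c i * j) := fun i _ ↦ by
    rw [show (c i * n + p) * (j + β * t) = β * p * t + p * j + n * c i * j + β * n * (c i * t) by
      ring, pow_add, pow_mul ζ (β * n), hζ, one_pow, mul_one, pow_add, pow_add, pow_mul]
  rw [circulantEigenvalue, sum_congr rfl hgen, ← mul_sum,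
    show p * (j + β * t) = β * p * t + p * j by ring, pow_add, pow_mul ζ (β * p)]
  ring

variable [IsDomain K]

theorem prod_range_circulantEigenvalue_add_mul (hζ : IsPrimitiveRoot ζ (β * n)) (hβ : 0 < β)
    (hn : 0 < n) (hpn : p.Coprime n) (j : ℕ) :
    ∏ t ∈ range n, circulantEigenvalue ζ D p n s c (j + β * t) =
      D ^ n - (1 + ∑ i ∈ s, ζ ^ (n * c i * j)) ^ n * ζ ^ (n * p * j) := by
  rw [prod_congr rfl fun t _ ↦ circulantEigenvalue_add_mul D p s c hζ.pow_eq_one j t,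
    (hζ.pow_mul_of_coprime hβ hn p hpn).prod_range_sub_pow_mul hn, mul_pow, ← pow_mul]
  ring_nf

theorem prod_Ico_circulantEigenvalue_mul (hζ : IsPrimitiveRoot ζ (β * n)) (hβ : 0 < β)
    (hn : 0 < n) (hpn : p.Coprime n) (hD : D = #s + 1) :
    ∏ t ∈ Ico 1 n, circulantEigenvalue ζ D p n s c (β * t) = n * D ^ (n - 1) := by
  have hfactor : ∀ t, circulantEigenvalue ζ D p n s c (β * t) = D * (1 - (ζ ^ (β * p)) ^ t) := by
    intro t
    rw [← zero_add (β * t), circulantEigenvalue_add_mul D p s c hζ.pow_eq_one]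
    simp only [mul_zero, pow_zero, sum_const, nsmul_one, hD]
    ring
  rw [prod_congr rfl fun t _ ↦ hfactor t, prod_mul_distrib, prod_const, Nat.card_Ico,
    (hζ.pow_mul_of_coprime hβ hn p hpn).prod_Ico_one_sub_pow hn, mul_comm]

theorem prod_Ico_circulantEigenvalue (hζ : IsPrimitiveRoot ζ (β * n)) (hβ : 0 < β)
    (hn : 0 < n) (hpn : p.Coprime n) (hD : D = #s + 1) :
    ∏ k ∈ Ico 1 (β * n), circulantEigenvalue ζ D p n s c k = n * D ^ (n - 1) *
      ∏ j ∈ Ico 1 β, (D ^ n - (1 + ∑ i ∈ s, ζ ^ (n * c i * j)) ^ n * ζ ^ (n * p * j)) := by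
  rw [prod_Ico_one_mul_eq_mul_prod_prod _ hβ,
    prod_Ico_circulantEigenvalue_mul D p s c hζ hβ hn hpn hD]
  simp only [prod_range_circulantEigenvalue_add_mul D p s c hζ hβ hn hpn]

end CirculantLaplacian

theorem prod_Ico_circulantEigenvalue_eq_mul_prod_one_sub {K ι : Type*} [Field K] {ζ : K} (D : K)
    {β n : ℕ} (p : ℕ) (s : Finset ι) (c : ι → ℕ) (hζ : IsPrimitiveRoot ζ (β * n)) (hβ : 0 < β)
    (hn : 0 < n) (hpn : p.Coprime n) (hD : D = #s + 1) (hD₀ : D ≠ 0) :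
    ∏ k ∈ Ico 1 (β * n), circulantEigenvalue ζ D p n s c k = n * D ^ (β * n - 1) *
      ∏ j ∈ Ico 1 β, (1 - (D ^ n)⁻¹ * (1 + ∑ i ∈ s, ζ ^ (n * c i * j)) ^ n * ζ ^ (n * p * j)) := by
  have hdeg : D ^ (n - 1) * (D ^ n) ^ (β - 1) = D ^ (β * n - 1) := by
    rw [← pow_mul, ← pow_add]
    congr 1
    zify [hn, hβ, Nat.one_le_iff_ne_zero.mpr (show β * n ≠ 0 by positivity)]
    ring
  rw [prod_Ico_circulantEigenvalue D p s c hζ hβ hn hpn hD,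
    prod_sub_eq_pow_card_mul_prod _ (pow_ne_zero n hD₀), Nat.card_Ico, ← hdeg]
  simp only [mul_assoc]

theorem Complex.exp_eq_exp_two_pi_I_div_pow {N : ℕ} (a : ℕ) {z : ℂ}
    (hz : 2 * π * I * a / N = z) : exp z = exp (2 * π * I / N) ^ a := by
  rw [← hz, ← exp_nat_mul]
  ring_nf

theorem stmt_14_general (d β p n : ℕ) (γ : ℕ → ℕ) (hd : 2 ≤ d)
    (hβ : 1 ≤ β) (hn : 1 ≤ n) (hpn : Nat.gcd p n = 1) :
    ∏ k ∈ Finset.Icc 1 (β * n - 1),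
        ((d : ℂ) - Complex.exp (2 * Real.pi * Complex.I * p * k / (β * n))
          - ∑ m ∈ Finset.Icc 1 (d - 1),
              Complex.exp (2 * Real.pi * Complex.I * (γ m * n + p) * k / (β * n)))
      = (n : ℂ) * (d : ℂ) ^ (β * n - 1) *
        ∏ k ∈ Finset.Icc 1 (β - 1),
          (1 - ((d : ℂ) ^ n)⁻¹
              * (1 + ∑ m ∈ Finset.Icc 1 (d - 1),
                  Complex.exp (2 * Real.pi * Complex.I * (γ m) * k / β)) ^ n
              * Complex.exp (2 * Real.pi * Complex.I * p * k / β)) := by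
  set ζ := Complex.exp (2 * π * Complex.I / (β * n : ℕ))
  have hζ : IsPrimitiveRoot ζ (β * n) := Complex.isPrimitiveRoot_exp _ (by positivity)
  have hn₀ : (n : ℂ) ≠ 0 := Nat.cast_ne_zero.mpr (by omega)
  have hp : ∀ k : ℕ, Complex.exp (2 * π * Complex.I * p * k / (β * n)) = ζ ^ (p * k) :=
    fun k ↦ Complex.exp_eq_exp_two_pi_I_div_pow _ (by push_cast; ring)
  have hγp : ∀ k m : ℕ, Complex.exp (2 * π * Complex.I * (γ m * n + p) * k / (β * n)) =
      ζ ^ ((γ m * n + p) * k) :=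
    fun k m ↦ Complex.exp_eq_exp_two_pi_I_div_pow _ (by push_cast; ring)
  have hγ : ∀ k m : ℕ, Complex.exp (2 * π * Complex.I * γ m * k / β) = ζ ^ (n * γ m * k) :=
    fun k m ↦ Complex.exp_eq_exp_two_pi_I_div_pow _ (by push_cast; field_simp)
  have hp' : ∀ k : ℕ, Complex.exp (2 * π * Complex.I * p * k / β) = ζ ^ (n * p * k) :=
    fun k ↦ Complex.exp_eq_exp_two_pi_I_div_pow _ (by push_cast; field_simp)
  have hIcc : ∀ N : ℕ, Icc 1 (N - 1) = Ico 1 N := fun _ ↦ rfl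
  have hd_card : (d : ℂ) = #(Icc 1 (d - 1)) + 1 := by
    rw [Nat.card_Icc, Nat.add_sub_cancel, Nat.cast_pred (by omega), sub_add_cancel]
  have key := prod_Ico_circulantEigenvalue_eq_mul_prod_one_sub (d : ℂ) p (Icc 1 (d - 1)) γ hζ hβ hn
    hpn hd_card (Nat.cast_ne_zero.mpr (by omega))
  unfold circulantEigenvalue at key
  simp only [hp, hγp, hγ, hp', hIcc β, hIcc (β * n)]
  exact key

/-- For `gcd(p,n) = 1`, the product of the `βn−1` nonzero Laplacian eigenvalues of the
directed circulant graph on `βn` vertices with generators `p, γ_1 n + p, …, γ_{d-1} n + p`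
reduces to a product of `β−1` factors:
`∏_{k=1}^{βn−1} (d − e^{2πipk/(βn)} − ∑_m e^{2πi(γ_m n+p)k/(βn)})
  = n d^{βn−1} ∏_{k=1}^{β−1} (1 − d^{−n}(1 + ∑_m e^{2πiγ_m k/β})^n e^{2πipk/β})`. -/
theorem stmt_14 (d β p n : ℕ) (γ : ℕ → ℕ) (hd : 2 ≤ d)
    (hγ1 : ∀ m ∈ Finset.Icc 1 (d - 1), 1 ≤ γ m)
    (hγmono : ∀ m ∈ Finset.Icc 1 (d - 1), ∀ m' ∈ Finset.Icc 1 (d - 1), m ≤ m' → γ m ≤ γ m')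
    (hγβ : ∀ m ∈ Finset.Icc 1 (d - 1), γ m ≤ β)
    (hβ : 1 ≤ β) (hp : 1 ≤ p) (hn : 1 ≤ n) (hpn : Nat.gcd p n = 1) :
    ∏ k ∈ Finset.Icc 1 (β * n - 1),
        ((d : ℂ) - Complex.exp (2 * Real.pi * Complex.I * p * k / (β * n))
          - ∑ m ∈ Finset.Icc 1 (d - 1),
              Complex.exp (2 * Real.pi * Complex.I * (γ m * n + p) * k / (β * n)))
      = (n : ℂ) * (d : ℂ) ^ (β * n - 1) *
        ∏ k ∈ Finset.Icc 1 (β - 1),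
          (1 - ((d : ℂ) ^ n)⁻¹
              * (1 + ∑ m ∈ Finset.Icc 1 (d - 1),
                  Complex.exp (2 * Real.pi * Complex.I * (γ m) * k / β)) ^ n
              * Complex.exp (2 * Real.pi * Complex.I * p * k / β)) :=
  stmt_14_general d β p n γ hd hβ hn hpn
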